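/- Let G be a connected pseudograph and C ∈ 2^{C_G}_even. Then the geometric realization of K^odd_{C,G} is homotopy equivalent to the geometric realization of its subcomplex K'_{C,G}. -/

import Mathlib

attribute [local instance] Classical.propDecidable

/-- An abstract simplicial complex on a vertex type `α` (faces are downward closed). -/
structure ASC (α : Type) where
  faces : Set (Finset α)
  down_closed : ∀ {s t : Finset α}, s ∈ faces → t ⊆ s → t ∈ faces

namespace ASC

variable {α β : Type}

/-- The geometric realization of an abstract simplicial complex, as the space of
convex-combination weight functions supported on a face. -/
def realization [Fintype α] (K : ASC α) : Type :=
  {f : α → ℝ // (∀ a, 0 ≤ f a) ∧ (∑ a, f a) = 1 ∧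
    (Finset.univ.filter fun a => f a ≠ 0) ∈ K.faces}

instance [Fintype α] (K : ASC α) : TopologicalSpace K.realization :=
  inferInstanceAs (TopologicalSpace {f : α → ℝ // _})

/-- `a` is a vertex of `K`. -/
def IsVertex (K : ASC α) (a : α) : Prop := {a} ∈ K.faces

/-- The complex `K \ St a`: all faces of `K` not containing `a`. -/
def delStar (K : ASC α) (a : α) : ASC α where
  faces := {s | s ∈ K.faces ∧ a ∉ s}
  down_closed := fun hs hts => ⟨K.down_closed hs.1 hts, fun hat => hs.2 (hts hat)⟩

/-- The link of a vertex `a` in `K`. -/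
def link (K : ASC α) (a : α) : ASC α where
  faces := {s | s ∈ K.faces ∧ a ∉ s ∧ insert a s ∈ K.faces}
  down_closed := fun hs hts =>
    ⟨K.down_closed hs.1 hts, fun hat => hs.2.1 (hts hat),
      K.down_closed hs.2.2 (Finset.insert_subset_insert _ hts)⟩

/-- The join of two abstract simplicial complexes. -/
def join (K : ASC α) (L : ASC β) : ASC (α ⊕ β) where
  faces := {s | ∃ u ∈ K.faces, ∃ v ∈ L.faces, s = u.image Sum.inl ∪ v.image Sum.inr}
  down_closed := by
    rintro s t ⟨u, hu, v, hv, rfl⟩ hts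
    refine ⟨u.filter (fun x => Sum.inl x ∈ t), K.down_closed hu (Finset.filter_subset _ _),
      v.filter (fun y => Sum.inr y ∈ t), L.down_closed hv (Finset.filter_subset _ _), ?_⟩
    ext x
    constructor
    · intro hx
      have hx' := hts hx
      simp only [Finset.mem_union, Finset.mem_image, Finset.mem_filter] at hx' ⊢
      rcases hx' with ⟨y, hy, rfl⟩ | ⟨y, hy, rfl⟩
      · exact Or.inl ⟨y, ⟨hy, hx⟩, rfl⟩
      · exact Or.inr ⟨y, ⟨hy, hx⟩, rfl⟩
    · intro hx
      simp only [Finset.mem_union, Finset.mem_image, Finset.mem_filter] at hx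
      rcases hx with ⟨y, ⟨hy, hyt⟩, rfl⟩ | ⟨y, ⟨hy, hyt⟩, rfl⟩ <;> exact hyt

/-- The join of a finite family of simplicial complexes on a common vertex type
(with pairwise disjoint vertex sets in applications). -/
def famJoin {ι : Type} [Fintype ι] (K : ι → ASC α) : ASC α where
  faces := {s | ∃ f : ι → Finset α, (∀ i, f i ∈ (K i).faces) ∧ s = Finset.univ.biUnion f}
  down_closed := by
    intro s t hs hts
    obtain ⟨f, hf, rfl⟩ := hs
    refine ⟨fun i => f i ∩ t, fun i => (K i).down_closed (hf i) Finset.inter_subset_left, ?_⟩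
    ext a
    simp only [Finset.mem_biUnion, Finset.mem_inter, Finset.mem_univ, true_and]
    constructor
    · intro ha
      obtain ⟨i, hi⟩ := Finset.mem_biUnion.1 (hts ha)
      exact ⟨i, hi.2, ha⟩
    · rintro ⟨i, hi, ha⟩
      exact ha

end ASC

/-! ## Pseudographs, tubes and tubing complexes -/

/-- An ambient multigraph structure without loops: each edge label in `E` is assigned an
unordered pair of distinct nodes of `V`. -/
structure Amb (V E : Type) where
  ends : E → Sym2 V
  noLoop : ∀ e, ¬ (ends e).IsDiag

variable {V E : Type} [Fintype V] [Fintype E] [DecidableEq V] [DecidableEq E]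

/-- A pseudograph (without loops) on nodes from `V` with edges from `E`: a subgraph of the
ambient structure `A`, given by a finite set of nodes and a finite set of edges whose
endpoints belong to the node set. -/
structure PSG (A : Amb V E) where
  verts : Finset V
  edges : Finset E
  incl : ∀ e ∈ edges, ∀ v ∈ A.ends e, v ∈ verts

namespace PSG

variable {A : Amb V E}

noncomputable instance : DecidableEq (PSG A) := Classical.decEq _

noncomputable instance : Fintype (PSG A) :=
  Fintype.ofInjective (fun H => (H.verts, H.edges))
    (by intro a b h; cases a; cases b; simp_all)

/-- The parallel class (possibly a bundle) of edges of `H` with endpoint pair `s`. -/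
def cls (H : PSG A) (s : Sym2 V) : Finset E :=
  H.edges.filter fun e => A.ends e = s

/-- `e` is a multiple edge of `H`. -/
def MultipleIn (H : PSG A) (e : E) : Prop :=
  e ∈ H.edges ∧ 2 ≤ (H.cls (A.ends e)).card

/-- `I` is a subgraph of `H`. -/
def Le (I H : PSG A) : Prop := I.verts ⊆ H.verts ∧ I.edges ⊆ H.edges

/-- Adjacency of two nodes via an edge of `H`. -/
def adjIn (H : PSG A) (v w : V) : Prop := ∃ e ∈ H.edges, A.ends e = s(v, w)

/-- Reachability inside `H`. -/
def reachIn (H : PSG A) : V → V → Prop := Relation.ReflTransGen (adjIn H)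

/-- `H` is a (nonempty) connected pseudograph. -/
def ConnIn (H : PSG A) : Prop :=
  H.verts.Nonempty ∧ ∀ v ∈ H.verts, ∀ w ∈ H.verts, reachIn H v w

/-- `I` is a semi-induced subgraph of `H`: it contains at least one edge between every
pair of its nodes joined by an edge of `H`. -/
def SemiInducedIn (H I : PSG A) : Prop :=
  Le I H ∧ ∀ e ∈ H.edges, (∀ v ∈ A.ends e, v ∈ I.verts) →
    ∃ e' ∈ I.edges, A.ends e' = A.ends e

/-- `J` is a connected component of `H`. -/
def IsComponent (H J : PSG A) : Prop :=
  Le J H ∧ J.verts.Nonempty ∧ ConnIn J ∧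
    (J.edges = H.edges.filter fun e => ∀ v ∈ A.ends e, v ∈ J.verts) ∧
    ∀ e ∈ H.edges, (∃ v ∈ A.ends e, v ∈ J.verts) → ∀ v ∈ A.ends e, v ∈ J.verts

/-- `I` is properly contained in its connected component of `H`. -/
def ProperIn (H I : PSG A) : Prop :=
  (∃ v ∈ H.verts, v ∉ I.verts ∧ ∃ w ∈ I.verts, reachIn H v w) ∨
    (∃ e ∈ H.edges, (∀ v ∈ A.ends e, v ∈ I.verts) ∧ e ∉ I.edges)

/-- `I` is a tube of `H`: a proper connected semi-induced subgraph of a connected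
component of `H`. -/
def TubeIn (H I : PSG A) : Prop := SemiInducedIn H I ∧ ConnIn I ∧ ProperIn H I

/-- Two subgraphs meet by separation in `H`: they are disjoint and no edge of `H`
connects them. -/
def SeparatedIn (H I J : PSG A) : Prop :=
  Disjoint I.verts J.verts ∧
    ∀ e ∈ H.edges, ¬ ((∃ v ∈ A.ends e, v ∈ I.verts) ∧ ∃ v ∈ A.ends e, v ∈ J.verts)

/-- Two tubes are compatible: they coincide, meet by inclusion, or meet by separation. -/
def Compatible (H I J : PSG A) : Prop :=
  I = J ∨ Le I J ∨ Le J I ∨ SeparatedIn H I J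

/-- The simplicial complex of all tubings of `H` (dual to the boundary of the pseudograph
associahedron `P_H`). -/
def tubingComplex (H : PSG A) : ASC (PSG A) where
  faces := {S | (∀ I ∈ S, TubeIn H I) ∧ ∀ I ∈ S, ∀ J ∈ S, Compatible H I J}
  down_closed := fun hs hts =>
    ⟨fun I hI => hs.1 I (hts hI), fun I hI J hJ => hs.2 I (hts hI) J (hts hJ)⟩

end PSG

/-- A collection of nodes and (multiple) edges, i.e. a candidate subset of `C_G`. -/
abbrev Coll (V E : Type) := Finset V × Finset E

namespace PSG

variable {A : Amb V E}

/-- The number of elements of the collection `C` belonging to the subgraph `I`,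
i.e. `|I ∩ C|`. -/
def interCard (I : PSG A) (C : Coll V E) : ℕ :=
  (I.verts ∩ C.1).card + (I.edges ∩ C.2).card

/-- `C ∈ 2^{C_G}_even`: `C` consists of nodes and multiple edges of `G`, with evenly many
nodes and evenly many edges from each bundle. -/
def EvenColl (G : PSG A) (C : Coll V E) : Prop :=
  C.1 ⊆ G.verts ∧ C.2 ⊆ G.edges ∧ (∀ e ∈ C.2, MultipleIn G e) ∧
    Even C.1.card ∧ ∀ s : Sym2 V, Even ((C.2 ∩ G.cls s).card)

/-- The subgraph `Γ̃_G(C)` of `G` induced by the nodes belonging to `C` or incident to an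
edge of `C`. -/
def GammaTilde (G : PSG A) (C : Coll V E) : PSG A where
  verts := G.verts.filter fun v => v ∈ C.1 ∨ ∃ e ∈ C.2, v ∈ A.ends e
  edges := G.edges.filter fun e => ∀ v ∈ A.ends e,
    v ∈ G.verts.filter fun v => v ∈ C.1 ∨ ∃ e ∈ C.2, v ∈ A.ends e
  incl := by
    intro e he v hv
    exact (Finset.mem_filter.1 he).2 v hv

/-- The simplicial complex `K^odd_{C,G}`: tubings of `G` consisting of tubes `I` with
`|I ∩ C|` odd. -/
def Kodd (G : PSG A) (C : Coll V E) : ASC (PSG A) where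
  faces := {S | S ∈ (tubingComplex G).faces ∧ ∀ I ∈ S, Odd (interCard I C)}
  down_closed := fun hs hts =>
    ⟨(tubingComplex G).down_closed hs.1 hts, fun I hI => hs.2 I (hts hI)⟩

/-- The subcomplex `K'_{C,G}` of `K^odd_{C,G}` on the tubes contained in `Γ̃_G(C)`. -/
def Kp (G : PSG A) (C : Coll V E) : ASC (PSG A) where
  faces := {S | S ∈ (Kodd G C).faces ∧ ∀ I ∈ S, Le I (GammaTilde G C)}
  down_closed := fun hs hts =>
    ⟨(Kodd _ _).down_closed hs.1 hts, fun I hI => hs.2 I (hts hI)⟩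

/-- The bundle condition on a tube `I`: for every bundle `B` of `Γ̃_G(C)` disjoint from
`C`, if both endpoints of `B` lie in `I` then `B ⊆ I`. -/
def BundleOK (G : PSG A) (C : Coll V E) (I : PSG A) : Prop :=
  ∀ s : Sym2 V, 2 ≤ ((GammaTilde G C).cls s).card →
    C.2 ∩ (GammaTilde G C).cls s = ∅ →
    (∀ v ∈ s, v ∈ I.verts) → (GammaTilde G C).cls s ⊆ I.edges

/-- The subcomplex `K''_{C,G}` of `K'_{C,G}` on the tubes satisfying the bundle
condition. -/
def Kpp (G : PSG A) (C : Coll V E) : ASC (PSG A) where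
  faces := {S | S ∈ (Kp G C).faces ∧ ∀ I ∈ S, BundleOK G C I}
  down_closed := fun hs hts =>
    ⟨(Kp _ _).down_closed hs.1 hts, fun I hI => hs.2 I (hts hI)⟩

/-- The restriction `C ∩ J` of a collection to a subgraph `J`. -/
def restrictColl (C : Coll V E) (J : PSG A) : Coll V E := (C.1 ∩ J.verts, C.2 ∩ J.edges)

/-- `C ∈ 2^{C_G}_even*`: moreover every connected component of `Γ̃_G(C)` is even with
respect to `C`. -/
def EvenStar (G : PSG A) (C : Coll V E) : Prop :=
  EvenColl G C ∧ ∀ J : PSG A, IsComponent (GammaTilde G C) J → Even (interCard J C)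

/-- The subgraph of `G` induced by a set `W` of nodes. -/
def inducedSub (G : PSG A) (W : Finset V) : PSG A where
  verts := W ∩ G.verts
  edges := G.edges.filter fun e => ∀ v ∈ A.ends e, v ∈ W ∩ G.verts
  incl := by
    intro e he v hv
    exact (Finset.mem_filter.1 he).2 v hv

/-- `H` is a partial underlying pseudograph of `H'`: it has the same nodes, and each
parallel class of `H'` is either kept entirely or replaced by a single (simple) edge. -/
def PartialUnderlying (H' H : PSG A) : Prop :=
  H.verts = H'.verts ∧ H.edges ⊆ H'.edges ∧
    ∀ s : Sym2 V, H'.cls s ⊆ H.edges ∨ (H.edges ∩ H'.cls s).card = 1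

/-- `H ⋖ G`: `H` is a partial underlying pseudograph of an induced subgraph of `G`. -/
def Lt (H G : PSG A) : Prop := ∃ W : Finset V, PartialUnderlying (inducedSub G W) H

/-- `H` is (a representative of) the pseudograph `Γ_G(C)`, obtained from `Γ̃_G(C)` by
replacing each bundle disjoint from `C` by a single simple edge. -/
def IsGammaOf (G : PSG A) (C : Coll V E) (H : PSG A) : Prop :=
  H.verts = (GammaTilde G C).verts ∧ H.edges ⊆ (GammaTilde G C).edges ∧
    ∀ s : Sym2 V,
      (((C.2 ∩ (GammaTilde G C).cls s).Nonempty ∨ ((GammaTilde G C).cls s).card ≤ 1) →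
        (GammaTilde G C).cls s ⊆ H.edges) ∧
      (C.2 ∩ (GammaTilde G C).cls s = ∅ → 2 ≤ ((GammaTilde G C).cls s).card →
        (H.edges ∩ (GammaTilde G C).cls s).card = 1)

/-- Admissibility of a collection `C` for a connected pseudograph `J`:
(a1) evenness, (a2) `C` contains every node not incident to a bundle, and
(a3) `C` meets every bundle. -/
def AdmissibleConn (J : PSG A) (C : Coll V E) : Prop :=
  Even ((C.1 ∩ J.verts).card) ∧ (∀ s : Sym2 V, Even ((C.2 ∩ J.cls s).card)) ∧
    (∀ v ∈ J.verts, (∀ s : Sym2 V, v ∈ s → (J.cls s).card ≤ 1) → v ∈ C.1) ∧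
    ∀ s : Sym2 V, 2 ≤ (J.cls s).card → (C.2 ∩ J.cls s).Nonempty

/-- `C` is an admissible collection of the pseudograph `H` (componentwise). -/
def Admissible (H : PSG A) (C : Coll V E) : Prop :=
  C.1 ⊆ H.verts ∧ C.2 ⊆ H.edges ∧ (∀ e ∈ C.2, MultipleIn H e) ∧
    ∀ J : PSG A, IsComponent H J → AdmissibleConn J C

end PSG

/-! ## Auxiliary development for Statement 9 -/

section ConeLemma

namespace ASC

variable {α : Type} [Fintype α]

/-- Push a `t`-fraction of the weight at `a` onto `w`. -/
noncomputable def push (a w : α) (t : ℝ) (f : α → ℝ) : α → ℝ :=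
  fun x => f x + (if x = w then t * f a else 0) - (if x = a then t * f a else 0)

lemma push_mem (K : ASC α) (a w : α) (hwa : w ≠ a)
    (hcone : ∀ s ∈ K.faces, a ∈ s → insert w s ∈ K.faces)
    {t : ℝ} (ht0 : 0 ≤ t) (ht1 : t ≤ 1) (f : α → ℝ)
    (hf : (∀ x, 0 ≤ f x) ∧ (∑ x, f x) = 1 ∧
      (Finset.univ.filter fun x => f x ≠ 0) ∈ K.faces) :
    (∀ x, 0 ≤ push a w t f x) ∧ (∑ x, push a w t f x) = 1 ∧
      (Finset.univ.filter fun x => push a w t f x ≠ 0) ∈ K.faces := by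
  obtain ⟨h0, h1, hs⟩ := hf
  refine ⟨?_, ?_, ?_⟩
  · intro x
    rcases eq_or_ne x a with rfl | hxa
    · have hxw : ¬ (x = w) := fun h => hwa h.symm
      show 0 ≤ f x + (if x = w then t * f x else 0) - (if x = x then t * f x else 0)
      rw [if_neg hxw, if_pos rfl]
      nlinarith [h0 x]
    · rcases eq_or_ne x w with rfl | hxw
      · show 0 ≤ f x + (if x = x then t * f a else 0) - (if x = a then t * f a else 0)
        rw [if_pos rfl, if_neg hxa]
        nlinarith [h0 x, mul_nonneg ht0 (h0 a)]
      · simp only [push, if_neg hxw, if_neg hxa, add_zero, sub_zero]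
        exact h0 x
  · simp only [push]
    rw [Finset.sum_sub_distrib, Finset.sum_add_distrib,
      Finset.sum_ite_eq' Finset.univ w (fun _ => t * f a),
      Finset.sum_ite_eq' Finset.univ a (fun _ => t * f a)]
    simp [h1]
  · by_cases hfa : f a = 0
    · have hpf : push a w t f = f := by
        funext x
        simp [push, hfa]
      rw [hpf]; exact hs
    · have hface : insert w (Finset.univ.filter fun x => f x ≠ 0) ∈ K.faces := by
        refine hcone _ hs ?_
        simp only [Finset.mem_filter, Finset.mem_univ, true_and]
        exact hfa
      refine K.down_closed hface ?_
      intro x hx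
      simp only [Finset.mem_filter, Finset.mem_univ, true_and] at hx
      rcases eq_or_ne x w with rfl | hxw
      · exact Finset.mem_insert_self _ _
      · refine Finset.mem_insert_of_mem ?_
        simp only [Finset.mem_filter, Finset.mem_univ, true_and]
        rcases eq_or_ne x a with rfl | hxa
        · exact hfa
        · intro h0x
          exact hx (by simp [push, hxw, hxa, h0x])

lemma push_one_apply_a (a w : α) (hwa : w ≠ a) (f : α → ℝ) :
    push a w 1 f a = 0 := by
  have hxw : ¬ (a = w) := fun h => hwa h.symm
  simp [push, hxw]

lemma push_zero (a w : α) (f : α → ℝ) : push a w 0 f = f := by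
  funext x; simp [push]

lemma push_of_apply_a_eq_zero (a w : α) (t : ℝ) (f : α → ℝ) (hfa : f a = 0) :
    push a w t f = f := by
  funext x; simp [push, hfa]

lemma continuous_push (a w : α) :
    Continuous fun p : ℝ × (α → ℝ) => push a w p.1 p.2 := by
  apply continuous_pi
  intro x
  have hx : ∀ y : α, Continuous fun p : ℝ × (α → ℝ) => p.2 y :=
    fun y => (continuous_apply y).comp continuous_snd
  have hc : Continuous fun p : ℝ × (α → ℝ) => p.1 * p.2 a :=
    continuous_fst.mul (hx a)
  have h2 : Continuous fun p : ℝ × (α → ℝ) => (if x = w then p.1 * p.2 a else 0) := by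
    by_cases h : x = w
    · simp only [if_pos h]; exact hc
    · simp only [if_neg h]; exact continuous_const
  have h3 : Continuous fun p : ℝ × (α → ℝ) => (if x = a then p.1 * p.2 a else 0) := by
    by_cases h : x = a
    · simp only [if_pos h]; exact hc
    · simp only [if_neg h]; exact continuous_const
  exact ((hx x).add h2).sub h3

/-- If every face containing `a` stays a face after inserting `w ≠ a`, then removing the
open star of `a` does not change the homotopy type of the realization. -/
lemma coneEquiv (K : ASC α) (a w : α) (hwa : w ≠ a)
    (hcone : ∀ s ∈ K.faces, a ∈ s → insert w s ∈ K.faces) :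
    Nonempty (ContinuousMap.HomotopyEquiv K.realization (K.delStar a).realization) := by
  have hmem : ∀ f : K.realization, (∀ x, 0 ≤ push a w 1 f.1 x) ∧
      (∑ x, push a w 1 f.1 x) = 1 ∧
      (Finset.univ.filter fun x => push a w 1 f.1 x ≠ 0) ∈ (K.delStar a).faces := by
    intro f
    obtain ⟨p1, p2, p3⟩ := push_mem K a w hwa hcone zero_le_one le_rfl f.1 f.2
    refine ⟨p1, p2, p3, ?_⟩
    intro h
    exact (Finset.mem_filter.1 h).2 (push_one_apply_a a w hwa f.1)
  let rmapC : C(K.realization, (K.delStar a).realization) :=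
    ⟨fun f => ⟨push a w 1 f.1, hmem f⟩, by
      refine Continuous.subtype_mk ?_ _
      exact (continuous_push a w).comp (continuous_const.prodMk continuous_subtype_val)⟩
  let imapC : C((K.delStar a).realization, K.realization) :=
    ⟨fun f => ⟨f.1, f.2.1, f.2.2.1, (f.2.2.2 : _ ∈ K.faces ∧ a ∉ _).1⟩, by
      exact Continuous.subtype_mk continuous_subtype_val _⟩
  have hHmem : ∀ p : unitInterval × K.realization,
      (∀ x, 0 ≤ push a w (1 - (p.1 : ℝ)) p.2.1 x) ∧
      (∑ x, push a w (1 - (p.1 : ℝ)) p.2.1 x) = 1 ∧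
      (Finset.univ.filter fun x => push a w (1 - (p.1 : ℝ)) p.2.1 x ≠ 0) ∈ K.faces := by
    intro p
    have ht0 : (0:ℝ) ≤ 1 - (p.1 : ℝ) := by
      have := unitInterval.le_one p.1; linarith
    have ht1 : (1:ℝ) - (p.1 : ℝ) ≤ 1 := by
      have := unitInterval.nonneg p.1; linarith
    exact push_mem K a w hwa hcone ht0 ht1 p.2.1 p.2.2
  let H : C(unitInterval × K.realization, K.realization) :=
    ⟨fun p => ⟨push a w (1 - (p.1 : ℝ)) p.2.1, hHmem p⟩, by
      refine Continuous.subtype_mk ?_ _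
      exact (continuous_push a w).comp
        ((continuous_const.sub (continuous_subtype_val.comp continuous_fst)).prodMk
          (continuous_subtype_val.comp continuous_snd))⟩
  refine ⟨{ toFun := rmapC, invFun := imapC, left_inv := ?_, right_inv := ?_ }⟩
  · refine ⟨{ toContinuousMap := H, map_zero_left := ?_, map_one_left := ?_ }⟩
    · intro f
      apply Subtype.ext
      show push a w (1 - ((0 : unitInterval) : ℝ)) f.1 = push a w 1 f.1
      norm_num
    · intro f
      apply Subtype.ext
      show push a w (1 - ((1 : unitInterval) : ℝ)) f.1 = f.1
      have h0 : (1 : ℝ) - ((1 : unitInterval) : ℝ) = 0 := by norm_num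
      rw [h0, push_zero]
  · have heq : rmapC.comp imapC = ContinuousMap.id _ := by
      apply ContinuousMap.ext
      intro f
      apply Subtype.ext
      have hfa : f.1 a = 0 := by
        by_contra h
        exact (f.2.2.2 : _ ∈ K.faces ∧ a ∉ _).2
          (Finset.mem_filter.2 ⟨Finset.mem_univ a, h⟩)
      show push a w 1 f.1 = f.1
      exact push_of_apply_a_eq_zero a w 1 f.1 hfa
    rw [heq]

end ASC

end ConeLemma

section Graph

open PSG

variable {V E : Type} [Fintype V] [Fintype E] [DecidableEq V] [DecidableEq E] {A : Amb V E}

lemma PSG.ext' {H1 H2 : PSG A} (h1 : H1.verts = H2.verts) (h2 : H1.edges = H2.edges) :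
    H1 = H2 := by cases H1; cases H2; simp_all

lemma ASC.ext' {β : Type} {K1 K2 : ASC β} (h : K1.faces = K2.faces) : K1 = K2 := by
  cases K1; cases K2; simp_all

lemma sym2_exists (z : Sym2 V) : ∃ x y, z = s(x, y) :=
  Sym2.ind (fun x y => ⟨x, y, rfl⟩) z

lemma adjIn_symm {H : PSG A} {u w : V} (h : adjIn H u w) : adjIn H w u := by
  obtain ⟨e, he, hee⟩ := h
  exact ⟨e, he, by rw [hee, Sym2.eq_swap]⟩

lemma reachIn_symm {H : PSG A} {u w : V} (h : reachIn H u w) : reachIn H w u :=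
  by
    unfold reachIn at h ⊢
    induction h with
    | refl => exact Relation.ReflTransGen.refl
    | tail _ hbc ih => exact ih.head (adjIn_symm hbc)

lemma reachIn_mono {H1 H2 : PSG A} (h : H1.edges ⊆ H2.edges) {u w : V}
    (hr : reachIn H1 u w) : reachIn H2 u w := by
  refine Relation.ReflTransGen.mono ?_ u w hr
  rintro x y ⟨e, he, hee⟩
  exact ⟨e, h he, hee⟩

/-- The connected component of `v` in `H`. -/
noncomputable def compOf (H : PSG A) (v : V) : PSG A where
  verts := H.verts.filter fun w => reachIn H v w
  edges := H.edges.filter fun e => ∀ u ∈ A.ends e, reachIn H v u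
  incl := by
    intro e he u hu
    simp only [Finset.mem_filter] at he ⊢
    exact ⟨H.incl e he.1 u hu, he.2 u hu⟩

/-- `H` minus the component of `v`. -/
noncomputable def minusComp (H : PSG A) (v : V) : PSG A where
  verts := H.verts.filter fun w => ¬ reachIn H v w
  edges := H.edges.filter fun e => ∀ u ∈ A.ends e, ¬ reachIn H v u
  incl := by
    intro e he u hu
    simp only [Finset.mem_filter] at he ⊢
    exact ⟨H.incl e he.1 u hu, he.2 u hu⟩

lemma mem_compOf_verts {H : PSG A} {v w : V} :
    w ∈ (compOf H v).verts ↔ w ∈ H.verts ∧ reachIn H v w := Finset.mem_filter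

lemma mem_compOf_edges {H : PSG A} {v : V} {e : E} :
    e ∈ (compOf H v).edges ↔ e ∈ H.edges ∧ ∀ u ∈ A.ends e, reachIn H v u :=
  Finset.mem_filter

lemma mem_minusComp_verts {H : PSG A} {v w : V} :
    w ∈ (minusComp H v).verts ↔ w ∈ H.verts ∧ ¬ reachIn H v w := Finset.mem_filter

lemma mem_minusComp_edges {H : PSG A} {v : V} {e : E} :
    e ∈ (minusComp H v).edges ↔ e ∈ H.edges ∧ ∀ u ∈ A.ends e, ¬ reachIn H v u :=
  Finset.mem_filter

lemma reach_compOf {H : PSG A} {v : V} :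
    ∀ {w : V}, reachIn H v w → reachIn (compOf H v) v w := by
  intro w h
  induction h with
  | refl => exact Relation.ReflTransGen.refl
  | tail hub hbc ih =>
    rename_i b c
    obtain ⟨e, he, hee⟩ := hbc
    have hadj : adjIn (compOf H v) b c := by
      refine ⟨e, ?_, hee⟩
      refine mem_compOf_edges.2 ⟨he, ?_⟩
      intro u hu
      rw [hee, Sym2.mem_iff] at hu
      rcases hu with rfl | rfl
      · exact hub
      · exact hub.tail ⟨e, he, hee⟩
    exact ih.tail hadj

lemma connIn_compOf {H : PSG A} {v : V} (hv : v ∈ H.verts) : ConnIn (compOf H v) := by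
  refine ⟨⟨v, mem_compOf_verts.2 ⟨hv, Relation.ReflTransGen.refl⟩⟩, ?_⟩
  intro x hx y hy
  have hx' := (mem_compOf_verts.1 hx).2
  have hy' := (mem_compOf_verts.1 hy).2
  exact (reachIn_symm (reach_compOf hx')).trans (reach_compOf hy')

lemma edge_reach_dichotomy {H : PSG A} {v : V} {e : E} (he : e ∈ H.edges) :
    (∀ u ∈ A.ends e, reachIn H v u) ∨ (∀ u ∈ A.ends e, ¬ reachIn H v u) := by
  obtain ⟨x, y, hxy⟩ := sym2_exists (A.ends e)
  by_cases hx : reachIn H v x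
  · left
    intro u hu
    rw [hxy, Sym2.mem_iff] at hu
    rcases hu with rfl | rfl
    · exact hx
    · exact hx.tail ⟨e, he, hxy⟩
  · right
    intro u hu hru
    apply hx
    rw [hxy, Sym2.mem_iff] at hu
    rcases hu with rfl | rfl
    · exact hru
    · exact hru.tail (adjIn_symm ⟨e, he, hxy⟩)

lemma interCard_split (H : PSG A) (v : V) (C : Coll V E) :
    interCard H C = interCard (compOf H v) C + interCard (minusComp H v) C := by
  have hv : (compOf H v).verts ∪ (minusComp H v).verts = H.verts :=
    Finset.filter_union_filter_not_eq _ _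
  have hdv : Disjoint (compOf H v).verts (minusComp H v).verts :=
    Finset.disjoint_filter_filter_not _ _ _
  have he : (compOf H v).edges ∪ (minusComp H v).edges = H.edges := by
    apply Finset.Subset.antisymm
    · exact Finset.union_subset (Finset.filter_subset _ _) (Finset.filter_subset _ _)
    · intro e heH
      rcases edge_reach_dichotomy (v := v) heH with h | h
      · exact Finset.mem_union_left _ (mem_compOf_edges.2 ⟨heH, h⟩)
      · exact Finset.mem_union_right _ (mem_minusComp_edges.2 ⟨heH, h⟩)
  have hde : Disjoint (compOf H v).edges (minusComp H v).edges := by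
    rw [Finset.disjoint_left]
    intro e h1 h2
    obtain ⟨x, y, hxy⟩ := sym2_exists (A.ends e)
    have hx : x ∈ A.ends e := by rw [hxy]; exact Sym2.mem_mk_left x y
    exact (mem_minusComp_edges.1 h2).2 x hx ((mem_compOf_edges.1 h1).2 x hx)
  unfold interCard
  rw [← hv, ← he, Finset.union_inter_distrib_right, Finset.union_inter_distrib_right,
    Finset.card_union_of_disjoint
      (Disjoint.mono Finset.inter_subset_left Finset.inter_subset_left hdv),
    Finset.card_union_of_disjoint
      (Disjoint.mono Finset.inter_subset_left Finset.inter_subset_left hde)]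
  omega

lemma minusComp_card_lt {H : PSG A} {v : V} (hv : v ∈ H.verts) :
    (minusComp H v).verts.card < H.verts.card := by
  apply Finset.card_lt_card
  refine (Finset.ssubset_iff_of_subset (Finset.filter_subset _ _)).2 ⟨v, hv, ?_⟩
  intro hvm
  exact (mem_minusComp_verts.1 hvm).2 Relation.ReflTransGen.refl

lemma not_reach_of_reach_of_not {H : PSG A} {v u w : V} (hvu : ¬ reachIn H v u)
    (huw : reachIn H u w) : ¬ reachIn H v w :=
  fun h => hvu (h.trans (reachIn_symm huw))

lemma reach_minus_of_reach {H : PSG A} {v u : V} (hvu : ¬ reachIn H v u) :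
    ∀ {w : V}, reachIn H u w → reachIn (minusComp H v) u w := by
  intro w h
  induction h with
  | refl => exact Relation.ReflTransGen.refl
  | tail hub hbc ih =>
    rename_i b c
    have hvb : ¬ reachIn H v b := not_reach_of_reach_of_not hvu hub
    have hvc : ¬ reachIn H v c := not_reach_of_reach_of_not hvu (hub.tail hbc)
    obtain ⟨e, he, hee⟩ := hbc
    refine ih.tail ⟨e, ?_, hee⟩
    refine mem_minusComp_edges.2 ⟨he, ?_⟩
    intro p hp
    rw [hee, Sym2.mem_iff] at hp
    rcases hp with rfl | rfl
    · exact hvb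
    · exact hvc

lemma compOf_minusComp {H : PSG A} {v u : V} (hu : u ∈ (minusComp H v).verts) :
    compOf (minusComp H v) u = compOf H u := by
  have hvu : ¬ reachIn H v u := (mem_minusComp_verts.1 hu).2
  have hfwd : ∀ {w : V}, reachIn (minusComp H v) u w → reachIn H u w :=
    fun hr => reachIn_mono (Finset.filter_subset _ _) hr
  apply PSG.ext'
  · ext x
    rw [mem_compOf_verts, mem_compOf_verts]
    constructor
    · rintro ⟨hx, hr⟩
      exact ⟨(mem_minusComp_verts.1 hx).1, hfwd hr⟩
    · rintro ⟨hx, hr⟩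
      exact ⟨mem_minusComp_verts.2 ⟨hx, not_reach_of_reach_of_not hvu hr⟩,
        reach_minus_of_reach hvu hr⟩
  · ext e
    rw [mem_compOf_edges, mem_compOf_edges]
    constructor
    · rintro ⟨hx, hr⟩
      exact ⟨(mem_minusComp_edges.1 hx).1, fun p hp => hfwd (hr p hp)⟩
    · rintro ⟨hx, hr⟩
      refine ⟨mem_minusComp_edges.2 ⟨hx, fun p hp =>
        not_reach_of_reach_of_not hvu (hr p hp)⟩, ?_⟩
      intro p hp
      exact reach_minus_of_reach hvu (hr p hp)

lemma verts_nonempty_of_odd {H : PSG A} {C : Coll V E} (h : Odd (interCard H C)) :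
    H.verts.Nonempty := by
  rcases Finset.eq_empty_or_nonempty H.verts with he | hne
  · exfalso
    have hedges : H.edges = ∅ := by
      rcases Finset.eq_empty_or_nonempty H.edges with h' | h'
      · exact h'
      · exfalso
        obtain ⟨e, hee⟩ := h'
        obtain ⟨x, y, hxy⟩ := sym2_exists (A.ends e)
        have := H.incl e hee x (by rw [hxy]; exact Sym2.mem_mk_left x y)
        rw [he] at this
        exact absurd this (Finset.notMem_empty x)
    rw [interCard, he, hedges] at h
    simp [Nat.odd_iff] at h
  · exact hne

lemma exists_odd_comp (C : Coll V E) :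
    ∀ n (H : PSG A), H.verts.card ≤ n → Odd (interCard H C) →
      ∃ v ∈ H.verts, Odd (interCard (compOf H v) C) := by
  intro n
  induction n with
  | zero =>
    intro H hcard hodd
    obtain ⟨v, hv⟩ := verts_nonempty_of_odd hodd
    have : H.verts = ∅ := Finset.card_eq_zero.1 (Nat.le_zero.1 hcard)
    rw [this] at hv
    exact absurd hv (Finset.notMem_empty v)
  | succ n ih =>
    intro H hcard hodd
    obtain ⟨v, hv⟩ := verts_nonempty_of_odd hodd
    rcases Nat.even_or_odd (interCard (compOf H v) C) with hev | hodd'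
    · have hsplit := interCard_split H v C
      have hoddm : Odd (interCard (minusComp H v) C) := by
        rw [Nat.odd_iff] at hodd ⊢
        rw [Nat.even_iff] at hev
        omega
      have hcard' : (minusComp H v).verts.card ≤ n := by
        have := minusComp_card_lt (H := H) (v := v) hv
        omega
      obtain ⟨u, hu, hoddu⟩ := ih (minusComp H v) hcard' hoddm
      refine ⟨u, (mem_minusComp_verts.1 hu).1, ?_⟩
      rwa [compOf_minusComp hu] at hoddu
    · exact ⟨v, hv, hodd'⟩

/-! ### Facts about `Γ̃` and tubes -/

lemma mem_gamma_verts_of_C1 (G : PSG A) (C : Coll V E) (hC : EvenColl G C) {v : V}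
    (hv : v ∈ C.1) : v ∈ (GammaTilde G C).verts := by
  refine Finset.mem_filter.2 ⟨hC.1 hv, Or.inl hv⟩

lemma mem_gamma_verts_of_C2 (G : PSG A) (C : Coll V E) (hC : EvenColl G C) {e : E}
    (he : e ∈ C.2) {v : V} (hv : v ∈ A.ends e) : v ∈ (GammaTilde G C).verts := by
  refine Finset.mem_filter.2 ⟨G.incl e (hC.2.1 he) v hv, Or.inr ⟨e, he, hv⟩⟩

lemma gamma_verts_subset (G : PSG A) (C : Coll V E) :
    (GammaTilde G C).verts ⊆ G.verts := Finset.filter_subset _ _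

lemma mem_gamma_edges (G : PSG A) (C : Coll V E) {e : E} (he : e ∈ G.edges)
    (h : ∀ v ∈ A.ends e, v ∈ (GammaTilde G C).verts) : e ∈ (GammaTilde G C).edges :=
  Finset.mem_filter.2 ⟨he, h⟩

lemma exists_bad_vert (G : PSG A) (C : Coll V E) {I : PSG A} (hIG : Le I G)
    (hbad : ¬ Le I (GammaTilde G C)) :
    ∃ u ∈ I.verts, u ∉ (GammaTilde G C).verts := by
  by_contra h
  push_neg at h
  apply hbad
  refine ⟨fun {u} hu => h u hu, ?_⟩
  intro e he
  refine mem_gamma_edges G C (hIG.2 he) ?_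
  intro v hv
  exact h v (I.incl e he v hv)

lemma compatible_symm {H I J : PSG A} (h : Compatible H I J) : Compatible H J I := by
  rcases h with rfl | h | h | h
  · exact Or.inl rfl
  · exact Or.inr (Or.inr (Or.inl h))
  · exact Or.inr (Or.inl h)
  · exact Or.inr (Or.inr (Or.inr ⟨h.1.symm, fun e he hcon => h.2 e he ⟨hcon.2, hcon.1⟩⟩))

/-- The subgraph `I ∩ Γ̃` (with all of `I`'s edges both of whose endpoints lie in `Γ̃`). -/
noncomputable def lamb (G : PSG A) (C : Coll V E) (I : PSG A) : PSG A where
  verts := I.verts ∩ (GammaTilde G C).verts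
  edges := I.edges.filter fun e => ∀ v ∈ A.ends e, v ∈ I.verts ∩ (GammaTilde G C).verts
  incl := fun e he v hv => (Finset.mem_filter.1 he).2 v hv

lemma interCard_lamb (G : PSG A) (C : Coll V E) (hC : EvenColl G C) (I : PSG A) :
    interCard (lamb G C I) C = interCard I C := by
  unfold interCard
  have h1 : (lamb G C I).verts ∩ C.1 = I.verts ∩ C.1 := by
    ext v
    simp only [lamb, Finset.mem_inter]
    constructor
    · rintro ⟨⟨ha, _⟩, hb⟩; exact ⟨ha, hb⟩
    · rintro ⟨ha, hb⟩; exact ⟨⟨ha, mem_gamma_verts_of_C1 G C hC hb⟩, hb⟩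
  have h2 : (lamb G C I).edges ∩ C.2 = I.edges ∩ C.2 := by
    ext e
    simp only [lamb, Finset.mem_inter, Finset.mem_filter]
    constructor
    · rintro ⟨⟨ha, _⟩, hb⟩; exact ⟨ha, hb⟩
    · rintro ⟨ha, hb⟩
      refine ⟨⟨ha, ?_⟩, hb⟩
      intro v hv
      exact ⟨I.incl e ha v hv, mem_gamma_verts_of_C2 G C hC hb hv⟩
  rw [h1, h2]

/-- The key combinatorial step: an odd bad tube `I` has a good odd tube `D ⊆ I ∩ Γ̃`
(an odd connected component of `I ∩ Γ̃`) that is compatible with every odd tube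
compatible with `I` that is not a strictly smaller bad tube. -/
lemma cone_step (G : PSG A) (hG : ConnIn G) (C : Coll V E) (hC : EvenColl G C)
    {I : PSG A} (hI : TubeIn G I) (hIodd : Odd (interCard I C))
    (hIbad : ¬ Le I (GammaTilde G C)) :
    ∃ D : PSG A, D ≠ I ∧ TubeIn G D ∧ Odd (interCard D C) ∧ Le D (GammaTilde G C) ∧
      (∀ J : PSG A, TubeIn G J → Compatible G I J →
        (¬ (Le J I ∧ J ≠ I) ∨ Le J (GammaTilde G C)) → Compatible G D J) := by
  have hIG : Le I G := hI.1.1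
  set Γ := GammaTilde G C with hΓdef
  set Λ := lamb G C I with hΛdef
  have hΛodd : Odd (interCard Λ C) := by
    rw [hΛdef, interCard_lamb G C hC I]; exact hIodd
  obtain ⟨v, hvΛ, hvodd⟩ := exists_odd_comp C Λ.verts.card Λ le_rfl hΛodd
  set D := compOf Λ v with hDdef
  obtain ⟨u, huI, huΓ⟩ := exists_bad_vert G C hIG hIbad
  have hΛvI : Λ.verts ⊆ I.verts := Finset.inter_subset_left
  have hΛvΓ : Λ.verts ⊆ Γ.verts := Finset.inter_subset_right
  have hΛeI : Λ.edges ⊆ I.edges := Finset.filter_subset _ _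
  have hΛeΓ : Λ.edges ⊆ Γ.edges := by
    intro e he
    have he' := Finset.mem_filter.1 he
    refine mem_gamma_edges G C (hIG.2 he'.1) ?_
    intro p hp
    exact (Finset.mem_inter.1 (he'.2 p hp)).2
  have hDvΛ : D.verts ⊆ Λ.verts := Finset.filter_subset _ _
  have hDeΛ : D.edges ⊆ Λ.edges := Finset.filter_subset _ _
  have hDvI : D.verts ⊆ I.verts := fun h hx => hΛvI (hDvΛ hx)
  have hDeI : D.edges ⊆ I.edges := fun h hx => hΛeI (hDeΛ hx)
  have hLeDG : Le D G := ⟨fun h hx => hIG.1 (hDvI hx), fun h hx => hIG.2 (hDeI hx)⟩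
  have hLeDΓ : Le D Γ := ⟨fun h hx => hΛvΓ (hDvΛ hx), fun h hx => hΛeΓ (hDeΛ hx)⟩
  have hLeDI : Le D I := ⟨hDvI, hDeI⟩
  have hDI : D ≠ I := by
    intro h
    apply huΓ
    apply hΛvΓ
    apply hDvΛ
    rw [h]
    exact huI
  have hsemi : SemiInducedIn G D := by
    refine ⟨hLeDG, ?_⟩
    intro e he hends
    obtain ⟨e', he', hee'⟩ := hI.1.2 e he (fun p hp => hDvI (hends p hp))
    refine ⟨e', ?_, hee'⟩
    have hpe' : ∀ p ∈ A.ends e', p ∈ D.verts := by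
      rw [hee']; exact hends
    have he'Λ : e' ∈ Λ.edges :=
      Finset.mem_filter.2 ⟨he', fun p hp => hDvΛ (hpe' p hp)⟩
    exact mem_compOf_edges.2 ⟨he'Λ, fun p hp => (mem_compOf_verts.1 (hpe' p hp)).2⟩
  have hconnD : ConnIn D := connIn_compOf hvΛ
  have hproper : ProperIn G D := by
    left
    refine ⟨u, hIG.1 huI, fun hu => huΓ (hΛvΓ (hDvΛ hu)), v, ?_, ?_⟩
    · exact mem_compOf_verts.2 ⟨hvΛ, Relation.ReflTransGen.refl⟩
    · exact hG.2 u (hIG.1 huI) v (hIG.1 (hΛvI hvΛ))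
  have hTubeD : TubeIn G D := ⟨hsemi, hconnD, hproper⟩
  refine ⟨D, hDI, hTubeD, hvodd, hLeDΓ, ?_⟩
  intro J hJtube hcomp hgood
  rcases hcomp with rfl | hIJ | hJI | hsep
  · exact Or.inr (Or.inl hLeDI)
  · exact Or.inr (Or.inl ⟨fun h hx => hIJ.1 (hDvI hx), fun h hx => hIJ.2 (hDeI hx)⟩)
  · rcases eq_or_ne J I with rfl | hne
    · exact Or.inr (Or.inl hLeDI)
    · have hJΓ : Le J Γ := by
        rcases hgood with hno | hJΓ
        · exact absurd ⟨hJI, hne⟩ hno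
        · exact hJΓ
      have hJΛv : J.verts ⊆ Λ.verts := fun x hx =>
        Finset.mem_inter.2 ⟨hJI.1 hx, hJΓ.1 hx⟩
      have hJΛe : J.edges ⊆ Λ.edges := fun e he =>
        Finset.mem_filter.2 ⟨hJI.2 he, fun p hp => hJΛv (J.incl e he p hp)⟩
      obtain ⟨⟨u0, hu0⟩, hconnJ⟩ := hJtube.2.1
      by_cases hr : reachIn Λ v u0
      · have hJDv : J.verts ⊆ D.verts := by
          intro w hw
          have h1 : reachIn J u0 w := hconnJ u0 hu0 w hw
          exact mem_compOf_verts.2 ⟨hJΛv hw, hr.trans (reachIn_mono hJΛe h1)⟩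
        have hJDe : J.edges ⊆ D.edges := by
          intro e he
          refine mem_compOf_edges.2 ⟨hJΛe he, ?_⟩
          intro p hp
          exact (mem_compOf_verts.1 (hJDv (J.incl e he p hp))).2
        exact Or.inr (Or.inr (Or.inl ⟨hJDv, hJDe⟩))
      · have hdisj : Disjoint D.verts J.verts := by
          rw [Finset.disjoint_left]
          intro x hxD hxJ
          apply hr
          have h1 : reachIn Λ v x := (mem_compOf_verts.1 hxD).2
          have h2 : reachIn J u0 x := hconnJ u0 hu0 x hxJ
          exact h1.trans (reachIn_symm (reachIn_mono hJΛe h2))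
        refine Or.inr (Or.inr (Or.inr ⟨hdisj, ?_⟩))
        rintro e he ⟨⟨p, hp, hpD⟩, ⟨q, hq, hqJ⟩⟩
        have hpq : p ≠ q := by
          intro h
          exact (Finset.disjoint_left.1 hdisj hpD) (h ▸ hqJ)
        obtain ⟨x, y, hxy⟩ := sym2_exists (A.ends e)
        have hends : A.ends e = s(p, q) := by
          rw [hxy] at hp hq ⊢
          rw [Sym2.mem_iff] at hp hq
          rcases hp with rfl | rfl <;> rcases hq with rfl | rfl
          · exact absurd rfl hpq
          · rfl
          · exact Sym2.eq_swap
          · exact absurd rfl hpq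
        have hpI : p ∈ I.verts := hDvI hpD
        have hqI : q ∈ I.verts := hJI.1 hqJ
        obtain ⟨e', he', hee'⟩ := hI.1.2 e he (by
          intro z hz
          rw [hends, Sym2.mem_iff] at hz
          rcases hz with rfl | rfl
          · exact hpI
          · exact hqI)
        have hpΓ : p ∈ Γ.verts := hΛvΓ (hDvΛ hpD)
        have hqΓ : q ∈ Γ.verts := hJΓ.1 hqJ
        have he'Λ : e' ∈ Λ.edges := by
          refine Finset.mem_filter.2 ⟨he', ?_⟩
          intro z hz
          rw [hee', hends, Sym2.mem_iff] at hz
          rcases hz with rfl | rfl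
          · exact Finset.mem_inter.2 ⟨hpI, hpΓ⟩
          · exact Finset.mem_inter.2 ⟨hqI, hqΓ⟩
        have hreachq : reachIn Λ v q :=
          ((mem_compOf_verts.1 hpD).2).tail ⟨e', he'Λ, by rw [hee', hends]⟩
        exact hr (hreachq.trans (reachIn_symm (reachIn_mono hJΛe (hconnJ u0 hu0 q hqJ))))
  · refine Or.inr (Or.inr (Or.inr ⟨hsep.1.mono_left hDvI, ?_⟩))
    rintro e he ⟨⟨p, hp, hpD⟩, hq⟩
    exact hsep.2 e he ⟨⟨p, hp, hDvI hpD⟩, hq⟩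

/-! ### The filtration by removed stars -/

/-- `K^odd` minus the open stars of the tubes in `R`. -/
noncomputable def KR (G : PSG A) (C : Coll V E) (R : Finset (PSG A)) : ASC (PSG A) where
  faces := {S | S ∈ (Kodd G C).faces ∧ ∀ J ∈ S, J ∉ R}
  down_closed := fun hs hts =>
    ⟨(Kodd G C).down_closed hs.1 hts, fun J hJ => hs.2 J (hts hJ)⟩

/-- The set of bad tubes: odd tubes not contained in `Γ̃`. -/
noncomputable def BadSet (G : PSG A) (C : Coll V E) : Finset (PSG A) :=
  Finset.univ.filter fun I =>
    TubeIn G I ∧ Odd (interCard I C) ∧ ¬ Le I (GammaTilde G C)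

def psgSize (I : PSG A) : ℕ := I.verts.card + I.edges.card

lemma psgSize_lt_of_le {I J : PSG A} (h : Le I J) (hne : I ≠ J) :
    psgSize I < psgSize J := by
  have h1 : I.verts.card ≤ J.verts.card := Finset.card_le_card h.1
  have h2 : I.edges.card ≤ J.edges.card := Finset.card_le_card h.2
  rcases eq_or_ne I.verts J.verts with hv | hv
  · rcases eq_or_ne I.edges J.edges with he | he
    · exact absurd (PSG.ext' hv he) hne
    · have := Finset.card_lt_card (h.2.ssubset_of_ne he)
      unfold psgSize; omega
  · have := Finset.card_lt_card (h.1.ssubset_of_ne hv)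
    unfold psgSize; omega

lemma KR_empty (G : PSG A) (C : Coll V E) : KR G C ∅ = Kodd G C := by
  apply ASC.ext'
  ext S
  simp [KR]

lemma KR_bad (G : PSG A) (C : Coll V E) : KR G C (BadSet G C) = Kp G C := by
  apply ASC.ext'
  ext S
  simp only [KR, Kp, BadSet, Set.mem_setOf_eq, Finset.mem_filter, Finset.mem_univ,
    true_and]
  constructor
  · rintro ⟨hS, h2⟩
    refine ⟨hS, ?_⟩
    intro J hJ
    by_contra hno
    exact h2 J hJ ⟨hS.1.1 J hJ, hS.2 J hJ, hno⟩
  · rintro ⟨hS, h2⟩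
    exact ⟨hS, fun J hJ h => h.2.2 (h2 J hJ)⟩

lemma delStar_KR (G : PSG A) (C : Coll V E) (R : Finset (PSG A)) (I : PSG A) :
    ASC.delStar (KR G C R) I = KR G C (insert I R) := by
  apply ASC.ext'
  ext S
  simp only [ASC.delStar, KR, Set.mem_setOf_eq, Finset.mem_insert]
  constructor
  · rintro ⟨⟨h1, h2⟩, h3⟩
    refine ⟨h1, ?_⟩
    intro J hJ h
    rcases h with rfl | h
    · exact h3 hJ
    · exact h2 J hJ h
  · rintro ⟨h1, h2⟩
    exact ⟨⟨h1, fun J hJ h => h2 J hJ (Or.inr h)⟩, fun hIS => h2 I hIS (Or.inl rfl)⟩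

lemma main_ind (G : PSG A) (hG : ConnIn G) (C : Coll V E) (hC : EvenColl G C) :
    ∀ n (B : Finset (PSG A)), B.card = n → B ⊆ BadSet G C →
      Nonempty (ContinuousMap.HomotopyEquiv
        (ASC.realization (KR G C (BadSet G C \ B))) (ASC.realization (Kp G C))) := by
  intro n
  induction n with
  | zero =>
    intro B hB _
    rw [Finset.card_eq_zero.1 hB, Finset.sdiff_empty, KR_bad]
    exact ⟨ContinuousMap.HomotopyEquiv.refl _⟩
  | succ n ih =>
    intro B hBcard hBsub
    have hBne : B.Nonempty := Finset.card_pos.1 (by omega)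
    obtain ⟨I, hIB, hImin⟩ := Finset.exists_min_image B psgSize hBne
    have hIbad : TubeIn G I ∧ Odd (interCard I C) ∧ ¬ Le I (GammaTilde G C) := by
      have := hBsub hIB
      simpa [BadSet] using this
    obtain ⟨D, hDI, hDtube, hDodd, hDΓ, hDcompat⟩ :=
      cone_step G hG C hC hIbad.1 hIbad.2.1 hIbad.2.2
    set R := BadSet G C \ B with hR
    have hcone : ∀ S ∈ (KR G C R).faces, I ∈ S → insert D S ∈ (KR G C R).faces := by
      intro S hS hIS
      have hS' : (S ∈ (tubingComplex G).faces ∧ ∀ X ∈ S, Odd (interCard X C)) ∧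
          ∀ J ∈ S, J ∉ R := hS
      obtain ⟨⟨hStub, hodd⟩, hnR⟩ := hS'
      obtain ⟨htube, hcompat⟩ := hStub
      have hDnotR : D ∉ R := by
        intro h
        exact (Finset.mem_filter.1 (Finset.mem_sdiff.1 h).1).2.2.2 hDΓ
      have hDcomp : ∀ J ∈ S, Compatible G D J := by
        intro J hJ
        refine hDcompat J (htube J hJ) (hcompat I hIS J hJ) ?_
        by_cases hJle : Le J I ∧ J ≠ I
        · right
          by_contra hJΓ
          have hJbad : J ∈ BadSet G C :=
            Finset.mem_filter.2 ⟨Finset.mem_univ J, htube J hJ, hodd J hJ, hJΓ⟩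
          have hJB : J ∈ B := by
            by_contra hJB
            exact hnR J hJ (Finset.mem_sdiff.2 ⟨hJbad, hJB⟩)
          have h1 := hImin J hJB
          have h2 := psgSize_lt_of_le hJle.1 hJle.2
          omega
        · exact Or.inl hJle
      refine ⟨⟨⟨?_, ?_⟩, ?_⟩, ?_⟩
      · intro X hX
        rcases Finset.mem_insert.1 hX with rfl | hX
        · exact hDtube
        · exact htube X hX
      · intro X hX Y hY
        rcases Finset.mem_insert.1 hX with rfl | hX'
        · rcases Finset.mem_insert.1 hY with rfl | hY'
          · exact Or.inl rfl
          · exact hDcomp _ hY'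
        · rcases Finset.mem_insert.1 hY with rfl | hY'
          · exact compatible_symm (hDcomp _ hX')
          · exact hcompat X hX' Y hY'
      · intro X hX
        rcases Finset.mem_insert.1 hX with rfl | hX
        · exact hDodd
        · exact hodd X hX
      · intro X hX
        rcases Finset.mem_insert.1 hX with rfl | hX
        · exact hDnotR
        · exact hnR X hX
    obtain ⟨equiv1⟩ := ASC.coneEquiv (KR G C R) I D hDI hcone
    have hstep : ASC.delStar (KR G C R) I = KR G C (BadSet G C \ B.erase I) := by
      rw [delStar_KR]
      congr 1
      ext X
      simp only [Finset.mem_insert, Finset.mem_sdiff, Finset.mem_erase, hR]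
      constructor
      · rintro (rfl | ⟨h1, h2⟩)
        · exact ⟨hBsub hIB, fun h => h.1 rfl⟩
        · exact ⟨h1, fun h => h2 h.2⟩
      · rintro ⟨h1, h2⟩
        by_cases hXI : X = I
        · exact Or.inl hXI
        · exact Or.inr ⟨h1, fun hXB => h2 ⟨hXI, hXB⟩⟩
    rw [hstep] at equiv1
    obtain ⟨equiv2⟩ := ih (B.erase I)
      (by rw [Finset.card_erase_of_mem hIB, hBcard]; rfl)
      ((Finset.erase_subset _ _).trans hBsub)
    exact ⟨equiv1.trans equiv2⟩

end Graph

open PSG in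
/-- For a connected pseudograph `G` and `C ∈ 2^{C_G}_even`, the
realization of `K^odd_{C,G}` is homotopy equivalent to that of its subcomplex
`K'_{C,G}`. -/
theorem stmt9 {V E : Type} [Fintype V] [Fintype E] [DecidableEq V] [DecidableEq E]
    {A : Amb V E} (G : PSG A) (hG : ConnIn G) (C : Coll V E) (hC : EvenColl G C) :
    Nonempty (ContinuousMap.HomotopyEquiv
      (ASC.realization (Kodd G C)) (ASC.realization (Kp G C))) := by
  have h := main_ind G hG C hC (BadSet G C).card (BadSet G C) rfl (Finset.Subset.refl _)
  rwa [Finset.sdiff_self, KR_empty] at h
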